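/- arXiv:1504.05290 — 2 statements merged into one kernel-verified Lean document; each statement's English description precedes it below -/
import Mathlib

section
/- Let C ≥ 1, let θ₁,…,θ_m be real-valued functions on a probability space (Ω,μ) forming a martingale difference sequence with |θ_i| ≤ C almost everywhere for all i, and let f : Ω → ℂ be measurable with |f| ≤ C almost everywhere. Then Σ_{S ⊆ {1,…,m}} C^{−4|S|} |∫_Ω (∏_{i∈S} θ_i) f dμ|² ≤ C², where the product over the empty set is 1. -/
/-!
For signs `ε ∈ {±1}^m` the Riesz product `P_ε = ∏ i, (1 + ε_i θ_i / C²)` is nonnegative, and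
expanding it, `P_ε = ∑_S C^{-2|S|} w_S(ε) ∏_{i ∈ S} θ_i` with the Walsh characters
`w_S(ε) = ∏_{i ∈ S} ε_i`. The martingale difference property kills the mean of every nonempty
product, so `∫ P_ε = 1` and `|∫ P_ε f| ≤ C`. On the other hand `∫ P_ε f` is the Walsh series with
coefficients `C^{-2|S|} ∫ (∏_{i ∈ S} θ_i) f`, so averaging `|∫ P_ε f|² ≤ C²` over `ε` and using
orthogonality of the Walsh characters gives the inequality.
-/

open MeasureTheory Finset

section Walsh

variable {ι : Type*}

def walsh (S : Finset ι) (ε : ι → ℤˣ) : ℤˣ := ∏ i ∈ S, ε i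

variable [Fintype ι] [DecidableEq ι]

lemma walsh_eq_prod_ite (S : Finset ι) (ε : ι → ℤˣ) :
    walsh S ε = ∏ i, if i ∈ S then ε i else 1 := by
  rw [walsh, prod_ite_mem, univ_inter]

lemma walsh_mul_walsh (S T : Finset ι) (ε : ι → ℤˣ) :
    walsh S ε * walsh T ε = walsh (symmDiff S T) ε := by
  simp only [walsh_eq_prod_ite, ← prod_mul_distrib]
  refine prod_congr rfl fun i _ => ?_
  by_cases hS : i ∈ S <;> by_cases hT : i ∈ T <;>
    simp [hS, hT, mem_symmDiff, Int.units_mul_self]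

lemma sum_walsh (S : Finset ι) :
    ∑ ε : ι → ℤˣ, (walsh S ε : ℤ) = if S = ∅ then 2 ^ Fintype.card ι else 0 := by
  simp_rw [walsh_eq_prod_ite, Units.coe_prod]
  rw [← Fintype.prod_sum (fun i (u : ℤˣ) => ((if i ∈ S then u else 1 : ℤˣ) : ℤ))]
  split_ifs with hS
  · simp [hS]
  · obtain ⟨i, hi⟩ := nonempty_iff_ne_empty.2 hS
    exact prod_eq_zero (mem_univ i) (by simp only [hi, if_true]; decide)

theorem sum_norm_sum_walsh_mul_sq (b : Finset ι → ℂ) :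
    ∑ ε : ι → ℤˣ, ‖∑ S, ((walsh S ε : ℤ) : ℂ) * b S‖ ^ 2
      = 2 ^ Fintype.card ι * ∑ S, ‖b S‖ ^ 2 := by
  apply Complex.ofReal_injective
  push_cast
  simp_rw [← Complex.mul_conj']
  calc ∑ ε : ι → ℤˣ, (∑ S, ((walsh S ε : ℤ) : ℂ) * b S)
          * (starRingEnd ℂ) (∑ T, ((walsh T ε : ℤ) : ℂ) * b T)
      = ∑ S, ∑ T, ((∑ ε : ι → ℤˣ, (walsh (symmDiff S T) ε : ℤ) : ℤ) : ℂ)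
          * (b S * (starRingEnd ℂ) (b T)) := by
        simp_rw [map_sum, map_mul, map_intCast, sum_mul_sum, ← walsh_mul_walsh]
        rw [sum_comm]
        refine sum_congr rfl fun S _ => ?_
        rw [sum_comm]
        refine sum_congr rfl fun T _ => ?_
        push_cast
        rw [sum_mul]
        exact sum_congr rfl fun ε _ => by ring
    _ = ∑ S, 2 ^ Fintype.card ι * (b S * (starRingEnd ℂ) (b S)) := by
        simp [sum_walsh]
    _ = _ := by rw [mul_sum]

end Walsh

section RieszProduct

variable {ι Ω : Type*} [Fintype ι]

def rieszProd (φ : ι → Ω → ℝ) (ε : ι → ℤˣ) (x : Ω) : ℝ := ∏ i, (1 + (ε i : ℤ) * φ i x)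

lemma rieszProd_eq_sum (φ : ι → Ω → ℝ) (ε : ι → ℤˣ) (x : Ω) :
    rieszProd φ ε x = ∑ S, (walsh S ε : ℤ) * ∏ i ∈ S, φ i x := by
  classical
  rw [rieszProd, prod_one_add, powerset_univ]
  refine sum_congr rfl fun S _ => ?_
  rw [walsh, Units.coe_prod, Int.cast_prod, ← prod_mul_distrib]

lemma rieszProd_nonneg {φ : ι → Ω → ℝ} {x : Ω} (hx : ∀ i, |φ i x| ≤ 1) (ε : ι → ℤˣ) :
    0 ≤ rieszProd φ ε x :=
  prod_nonneg fun i _ => by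
    rcases Int.units_eq_one_or (ε i) with h | h <;>
      simp only [h, Units.val_one, Units.val_neg, Int.cast_one, Int.cast_neg, neg_mul, one_mul] <;>
      linarith [abs_le.1 (hx i)]

variable [MeasurableSpace Ω] {μ : Measure Ω} {φ : ι → Ω → ℝ}
  (hint : ∀ S : Finset ι, Integrable (fun x => ∏ i ∈ S, φ i x) μ)
include hint

lemma integrable_rieszProd (ε : ι → ℤˣ) : Integrable (rieszProd φ ε) μ := by
  simp_rw [funext (rieszProd_eq_sum φ ε)]
  exact integrable_finsetSum _ fun S _ => (hint S).const_mul _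

lemma integral_rieszProd [IsProbabilityMeasure μ]
    (hmean : ∀ S : Finset ι, S.Nonempty → ∫ x, ∏ i ∈ S, φ i x ∂μ = 0) (ε : ι → ℤˣ) :
    ∫ x, rieszProd φ ε x ∂μ = 1 := by
  simp_rw [rieszProd_eq_sum, integral_finsetSum _ fun S _ => (hint S).const_mul _,
    integral_const_mul]
  rw [sum_eq_single ∅ (fun S _ hS => by rw [hmean S (nonempty_iff_ne_empty.2 hS), mul_zero])
    (by simp)]
  simp [walsh]

lemma integral_rieszProd_mul {f : Ω → ℂ} {B : ℝ} (hfm : AEStronglyMeasurable f μ)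
    (hf : ∀ᵐ x ∂μ, ‖f x‖ ≤ B) (ε : ι → ℤˣ) :
    ∫ x, (rieszProd φ ε x : ℂ) * f x ∂μ
      = ∑ S, ((walsh S ε : ℤ) : ℂ) * ∫ x, ((∏ i ∈ S, φ i x : ℝ) : ℂ) * f x ∂μ := by
  have hexpand (x : Ω) : (rieszProd φ ε x : ℂ) * f x
      = ∑ S, ((walsh S ε : ℤ) : ℂ) * (((∏ i ∈ S, φ i x : ℝ) : ℂ) * f x) := by
    rw [rieszProd_eq_sum]
    push_cast
    simp_rw [sum_mul, mul_assoc]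
  simp_rw [hexpand]
  rw [integral_finsetSum _ fun S _ => ?_]
  · simp_rw [integral_const_mul]
  · exact ((hint S).ofReal.mul_bdd hfm hf).const_mul _

lemma norm_integral_rieszProd_mul_le [IsProbabilityMeasure μ]
    (hmean : ∀ S : Finset ι, S.Nonempty → ∫ x, ∏ i ∈ S, φ i x ∂μ = 0)
    (hφ : ∀ i, ∀ᵐ x ∂μ, |φ i x| ≤ 1) {f : Ω → ℂ} {B : ℝ} (hf : ∀ᵐ x ∂μ, ‖f x‖ ≤ B)
    (ε : ι → ℤˣ) : ‖∫ x, (rieszProd φ ε x : ℂ) * f x ∂μ‖ ≤ B := by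
  calc ‖∫ x, (rieszProd φ ε x : ℂ) * f x ∂μ‖ ≤ ∫ x, B * rieszProd φ ε x ∂μ := by
        refine norm_integral_le_of_norm_le ((integrable_rieszProd hint ε).const_mul B) ?_
        filter_upwards [ae_all_iff.2 hφ, hf] with x hx hfx
        rw [norm_mul, Complex.norm_real, Real.norm_of_nonneg (rieszProd_nonneg hx ε), mul_comm]
        exact mul_le_mul_of_nonneg_right hfx (rieszProd_nonneg hx ε)
    _ = B := by rw [integral_const_mul, integral_rieszProd hint hmean, mul_one]

end RieszProduct

lemma integral_mul_eq_zero_of_condExp_eq_zero {Ω : Type*} {m m₀ : MeasurableSpace Ω}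
    {μ : Measure[m₀] Ω} (hm : m ≤ m₀) [SigmaFinite (μ.trim hm)] {g h : Ω → ℝ}
    (hg : StronglyMeasurable[m] g) (hgh : Integrable (g * h) μ) (hh : Integrable h μ)
    (hce : μ[h | m] =ᵐ[μ] 0) :
    ∫ x, g x * h x ∂μ = 0 := by
  calc ∫ x, g x * h x ∂μ = ∫ x, μ[g * h | m] x ∂μ := (integral_condExp hm).symm
    _ = ∫ x, g x * 0 ∂μ := by
        refine integral_congr_ae ((condExp_mul_of_stronglyMeasurable_left hg hgh hh).trans ?_)
        filter_upwards [hce] with x hx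
        simp [hx]
    _ = 0 := by simp

section Products

variable {Ω : Type*} [MeasurableSpace Ω] {μ : Measure Ω}

lemma integrable_prod_of_ae_abs_le [IsFiniteMeasure μ] {ι : Type*} {θ : ι → Ω → ℝ} {K : ℝ}
    (S : Finset ι) (hm : ∀ i ∈ S, AEStronglyMeasurable (θ i) μ)
    (hb : ∀ i ∈ S, ∀ᵐ x ∂μ, |θ i x| ≤ K) :
    Integrable (fun x => ∏ i ∈ S, θ i x) μ := by
  refine .of_bound (S.aestronglyMeasurable_fun_prod hm) (K ^ #S) ?_
  filter_upwards [(Filter.eventually_all_finset S).2 hb] with x hx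
  rw [Real.norm_eq_abs, abs_prod, ← prod_const]
  exact prod_le_prod (fun i _ => abs_nonneg _) hx

theorem sum_norm_integral_prod_mul_sq_le [IsProbabilityMeasure μ] {ι : Type*} [Fintype ι]
    {φ : ι → Ω → ℝ} {f : Ω → ℂ} {B : ℝ}
    (hφm : ∀ i, AEStronglyMeasurable (φ i) μ) (hφ : ∀ i, ∀ᵐ x ∂μ, |φ i x| ≤ 1)
    (hmean : ∀ S : Finset ι, S.Nonempty → ∫ x, ∏ i ∈ S, φ i x ∂μ = 0)
    (hfm : AEStronglyMeasurable f μ) (hf : ∀ᵐ x ∂μ, ‖f x‖ ≤ B) :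
    ∑ S : Finset ι, ‖∫ x, ((∏ i ∈ S, φ i x : ℝ) : ℂ) * f x ∂μ‖ ^ 2 ≤ B ^ 2 := by
  classical
  have hint (S : Finset ι) : Integrable (fun x => ∏ i ∈ S, φ i x) μ :=
    integrable_prod_of_ae_abs_le S (fun i _ => hφm i) (fun i _ => hφ i)
  refine le_of_mul_le_mul_left ?_ (by positivity : (0 : ℝ) < 2 ^ Fintype.card ι)
  calc (2 : ℝ) ^ Fintype.card ι
        * ∑ S : Finset ι, ‖∫ x, ((∏ i ∈ S, φ i x : ℝ) : ℂ) * f x ∂μ‖ ^ 2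
      = ∑ ε : ι → ℤˣ, ‖∫ x, (rieszProd φ ε x : ℂ) * f x ∂μ‖ ^ 2 := by
        simp_rw [integral_rieszProd_mul hint hfm hf, sum_norm_sum_walsh_mul_sq]
    _ ≤ ∑ _ε : ι → ℤˣ, B ^ 2 := sum_le_sum fun ε _ =>
        pow_le_pow_left₀ (norm_nonneg _) (norm_integral_rieszProd_mul_le hint hmean hφ hf ε) 2
    _ = 2 ^ Fintype.card ι * B ^ 2 := by simp

theorem integral_prod_eq_zero_of_condExp_eq_zero [IsFiniteMeasure μ] {ι : Type*} [LinearOrder ι]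
    {θ : ι → Ω → ℝ} (hθm : ∀ i, Measurable (θ i))
    (hmds : ∀ s, μ[θ s | ⨆ i : {i // i < s}, MeasurableSpace.comap (θ i) inferInstance] =ᵐ[μ] 0)
    (hint : ∀ S : Finset ι, Integrable (fun x => ∏ i ∈ S, θ i x) μ)
    {S : Finset ι} (hS : S.Nonempty) :
    ∫ x, ∏ i ∈ S, θ i x ∂μ = 0 := by
  obtain ⟨s, hsS, hlt⟩ : ∃ s ∈ S, ∀ i ∈ S.erase s, i < s :=
    ⟨S.max' hS, S.max'_mem hS, fun i hi => S.lt_max'_of_mem_erase_max' hS hi⟩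
  have hsplit : (fun x => ∏ i ∈ S, θ i x) = (∏ i ∈ S.erase s, θ i) * θ s := by
    ext x
    rw [Pi.mul_apply, prod_apply, prod_erase_mul _ _ hsS]
  have hpast : StronglyMeasurable[⨆ i : {i // i < s}, MeasurableSpace.comap (θ i) inferInstance]
      (∏ i ∈ S.erase s, θ i) :=
    Finset.stronglyMeasurable_prod _ fun i hi => ((comap_measurable (θ i)).mono
      (le_iSup (fun j : {j // j < s} => MeasurableSpace.comap (θ j) inferInstance) ⟨i, hlt i hi⟩)
      le_rfl).stronglyMeasurable
  calc ∫ x, ∏ i ∈ S, θ i x ∂μ = ∫ x, ((∏ i ∈ S.erase s, θ i) * θ s) x ∂μ := by rw [hsplit]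
    _ = 0 := integral_mul_eq_zero_of_condExp_eq_zero
        (iSup_le fun i : {i // i < s} => (hθm i).comap_le) hpast (hsplit ▸ hint S)
        (by simpa using hint {s}) (hmds s)

end Products

/-- Bessel-type bound for products of a martingale difference sequence.  If
`θ₁,…,θ_m` is a martingale difference sequence with `|θ_i| ≤ C` a.e. and `f` is
measurable with `|f| ≤ C` a.e., then
`∑_{S ⊆ {1,…,m}} C^{−4|S|} |∫ (∏_{i∈S} θ_i) f dμ|² ≤ C²`. -/
theorem stmt12 (C : ℝ) (hC : 1 ≤ C) (m : ℕ) (Ω : Type) [MeasurableSpace Ω]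
    (μ : Measure Ω) [IsProbabilityMeasure μ] (θ : Fin m → Ω → ℝ) (f : Ω → ℂ)
    (hθmeas : ∀ i, Measurable (θ i))
    (hθbd : ∀ i, ∀ᵐ x ∂μ, |θ i x| ≤ C)
    -- martingale difference sequence
    (hmds : ∀ s : Fin m,
      μ[θ s | ⨆ i : {i : Fin m // i < s},
          MeasurableSpace.comap (θ i) inferInstance] =ᵐ[μ] 0)
    (hfmeas : Measurable f) (hfbd : ∀ᵐ x ∂μ, ‖f x‖ ≤ C) :
    ∑ S : Finset (Fin m),
        (C ^ (4 * S.card))⁻¹ * ‖∫ x, ((∏ i ∈ S, θ i x : ℝ) : ℂ) * f x ∂μ‖ ^ 2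
      ≤ C ^ 2 := by
  set c : ℝ := (C ^ 2)⁻¹
  have hc : 0 ≤ c := by positivity
  have hint (S : Finset (Fin m)) : Integrable (fun x => ∏ i ∈ S, θ i x) μ :=
    integrable_prod_of_ae_abs_le S (fun i _ => (hθmeas i).aestronglyMeasurable)
      (fun i _ => hθbd i)
  have hcθ (i : Fin m) : ∀ᵐ x ∂μ, |c * θ i x| ≤ 1 := by
    filter_upwards [hθbd i] with x hx
    rw [abs_mul, abs_of_nonneg hc]
    calc c * |θ i x| ≤ c * C ^ 2 := by gcongr; exact hx.trans (le_self_pow₀ hC two_ne_zero)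
      _ = 1 := inv_mul_cancel₀ (by positivity)
  have hmean (S : Finset (Fin m)) (hS : S.Nonempty) : ∫ x, ∏ i ∈ S, c * θ i x ∂μ = 0 := by
    simp_rw [prod_mul_distrib, prod_const, integral_const_mul,
      integral_prod_eq_zero_of_condExp_eq_zero hθmeas hmds hint hS, mul_zero]
  convert sum_norm_integral_prod_mul_sq_le
    (fun i => ((hθmeas i).const_mul c).aestronglyMeasurable) hcθ hmean
    hfmeas.aestronglyMeasurable hfbd using 2 with S
  simp_rw [prod_mul_distrib, prod_const]
  push_cast
  simp_rw [mul_assoc, integral_const_mul, norm_mul, mul_pow]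
  rw [norm_pow, Complex.norm_of_nonneg hc, ← pow_mul, inv_pow, ← pow_mul]
  ring_nf
end

section
/- Let T be a finite nonempty index set, (Ω,μ) a probability space, and for each t ∈ T let Z_t be an integrable complex-valued random variable on Ω with E Z_t = 0. On the product probability space Ω × Ω define Z̃_t(ω₁,ω₂) := Re Z_t(ω₁) + Im Z_t(ω₂). Then (1/2) E max_{t∈T} |Z_t| ≤ E max_{t∈T} |Z̃_t| ≤ 2 E max_{t∈T} |Z_t|. -/
/-!
The upper bound is the triangle inequality `|Re a + Im b| ≤ ‖a‖ + ‖b‖`, integrated over the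
product. For the lower bound: as `Im Z_t` is centered, `Re Z_t(ω₁)` is the
`ω₂`-average of `Z̃_t(ω₁, ·)`, so Jensen's inequality for `|·|` gives
`E max_t |Re Z_t| ≤ E max_t |Z̃_t|`; symmetrically for `Im Z_t`, and
`‖z‖ ≤ |Re z| + |Im z|` adds the two.
-/

open MeasureTheory Finset

namespace MeasureTheory

variable {ι : Type*} [Fintype ι] [Nonempty ι]
  {X Y : Type*} [MeasurableSpace X] [MeasurableSpace Y] {μ : Measure X} {ν : Measure Y}

theorem ciSup_le_ciSup_add_ciSup_of_le {a b c : ι → ℝ} (h : ∀ i, a i ≤ b i + c i) :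
    ⨆ i, a i ≤ (⨆ i, b i) + ⨆ i, c i :=
  (ciSup_mono (Finite.bddAbove_range _) h).trans
    (ciSup_add_le_ciSup_add_ciSup (Finite.bddAbove_range b) (Finite.bddAbove_range c))

theorem Integrable.ciSup {f : ι → X → ℝ} (hf : ∀ i, Integrable (f i) μ) :
    Integrable (fun x => ⨆ i, f i x) μ := by
  have h := univ.sup'_induction univ_nonempty f (p := (Integrable · μ))
    (fun _ h₁ _ h₂ => h₁.sup h₂) (fun i _ => hf i)
  convert h using 1
  ext x
  rw [Finset.sup'_apply, Finset.sup'_univ_eq_ciSup]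

theorem integral_ciSup_mono {f g : ι → X → ℝ} (hf : ∀ i, Integrable (f i) μ)
    (hg : ∀ i, Integrable (g i) μ) (hfg : ∀ i x, f i x ≤ g i x) :
    ∫ x, ⨆ i, f i x ∂μ ≤ ∫ x, ⨆ i, g i x ∂μ :=
  integral_mono (Integrable.ciSup hf) (Integrable.ciSup hg) fun x =>
    ciSup_mono (Finite.bddAbove_range _) fun i => hfg i x

variable {f : ι → X → ℝ} {g : ι → Y → ℝ}

theorem ciSup_abs_le_integral_ciSup_abs_add [IsProbabilityMeasure ν]
    (hg : ∀ i, Integrable (g i) ν) (hg₀ : ∀ i, ∫ y, g i y ∂ν = 0) (a : ι → ℝ) :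
    ⨆ i, |a i| ≤ ∫ y, ⨆ i, |a i + g i y| ∂ν := by
  refine ciSup_le fun i => ?_
  have hmean : ∫ y, (a i + g i y) ∂ν = a i := by
    simp [integral_add (integrable_const _) (hg i), hg₀ i]
  calc |a i| = |∫ y, (a i + g i y) ∂ν| := by rw [hmean]
    _ ≤ ∫ y, |a i + g i y| ∂ν := abs_integral_le_integral_abs
    _ ≤ ∫ y, ⨆ j, |a j + g j y| ∂ν :=
      integral_mono ((integrable_const _).add (hg i)).abs
        (Integrable.ciSup fun j => ((integrable_const _).add (hg j)).abs)
        fun y => le_ciSup (Finite.bddAbove_range fun j => |a j + g j y|) i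

theorem integrable_prod_ciSup_abs_add [IsFiniteMeasure μ] [IsFiniteMeasure ν]
    (hf : ∀ i, Integrable (f i) μ) (hg : ∀ i, Integrable (g i) ν) :
    Integrable (fun z : X × Y => ⨆ i, |f i z.1 + g i z.2|) (μ.prod ν) :=
  Integrable.ciSup fun i => (((hf i).comp_fst ν).add ((hg i).comp_snd μ)).abs

theorem integral_ciSup_abs_le_integral_prod_of_integral_snd_eq_zero [IsFiniteMeasure μ]
    [IsProbabilityMeasure ν] (hf : ∀ i, Integrable (f i) μ) (hg : ∀ i, Integrable (g i) ν)
    (hg₀ : ∀ i, ∫ y, g i y ∂ν = 0) :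
    ∫ x, ⨆ i, |f i x| ∂μ ≤ ∫ z, ⨆ i, |f i z.1 + g i z.2| ∂(μ.prod ν) := by
  have hF := integrable_prod_ciSup_abs_add hf hg
  rw [integral_prod _ hF]
  exact integral_mono (Integrable.ciSup fun i => (hf i).abs) hF.integral_prod_left
    fun x => ciSup_abs_le_integral_ciSup_abs_add hg hg₀ (f · x)

theorem integral_ciSup_abs_le_integral_prod_of_integral_fst_eq_zero [IsProbabilityMeasure μ]
    [IsFiniteMeasure ν] (hf : ∀ i, Integrable (f i) μ) (hg : ∀ i, Integrable (g i) ν)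
    (hf₀ : ∀ i, ∫ x, f i x ∂μ = 0) :
    ∫ y, ⨆ i, |g i y| ∂ν ≤ ∫ z, ⨆ i, |f i z.1 + g i z.2| ∂(μ.prod ν) := by
  rw [← integral_prod_swap]
  simpa only [Prod.fst_swap, Prod.snd_swap, add_comm]
    using integral_ciSup_abs_le_integral_prod_of_integral_snd_eq_zero hg hf hf₀

theorem integral_prod_ciSup_abs_add_le [IsProbabilityMeasure μ] [IsProbabilityMeasure ν]
    (hf : ∀ i, Integrable (f i) μ) (hg : ∀ i, Integrable (g i) ν) :
    ∫ z, ⨆ i, |f i z.1 + g i z.2| ∂(μ.prod ν)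
      ≤ ∫ x, ⨆ i, |f i x| ∂μ + ∫ y, ⨆ i, |g i y| ∂ν := by
  have hF : Integrable (fun x => ⨆ i, |f i x|) μ := Integrable.ciSup fun i => (hf i).abs
  have hG : Integrable (fun y => ⨆ i, |g i y|) ν := Integrable.ciSup fun i => (hg i).abs
  calc ∫ z, ⨆ i, |f i z.1 + g i z.2| ∂(μ.prod ν)
      ≤ ∫ z, ((⨆ i, |f i z.1|) + ⨆ i, |g i z.2|) ∂(μ.prod ν) :=
        integral_mono (integrable_prod_ciSup_abs_add hf hg)
          ((hF.comp_fst ν).add (hG.comp_snd μ))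
          fun z => ciSup_le_ciSup_add_ciSup_of_le fun i => abs_add_le _ _
    _ = ∫ x, ⨆ i, |f i x| ∂μ + ∫ y, ⨆ i, |g i y| ∂ν := by
        rw [integral_add (hF.comp_fst ν) (hG.comp_snd μ),
          integral_fun_fst (fun x => ⨆ i, |f i x|), integral_fun_snd (fun y => ⨆ i, |g i y|)]
        simp

end MeasureTheory

/-- Comparison between a centered finite family of complex random variables `Z_t` and
the decoupled real process `Z̃_t(ω₁,ω₂) = Re Z_t(ω₁) + Im Z_t(ω₂)`:
`(1/2) E max_t |Z_t| ≤ E max_t |Z̃_t| ≤ 2 E max_t |Z_t|`. -/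
theorem stmt18 (T : Type) [Fintype T] [Nonempty T]
    (Ω : Type) [MeasurableSpace Ω] (μ : Measure Ω) [IsProbabilityMeasure μ]
    (Z : T → Ω → ℂ)
    (hint : ∀ t, Integrable (Z t) μ)
    (hmean : ∀ t, ∫ ω, Z t ω ∂μ = 0) :
    (1 / 2 : ℝ) * ∫ ω, ⨆ t, ‖Z t ω‖ ∂μ
        ≤ ∫ ω : Ω × Ω, ⨆ t, |(Z t ω.1).re + (Z t ω.2).im| ∂(μ.prod μ) ∧
      ∫ ω : Ω × Ω, ⨆ t, |(Z t ω.1).re + (Z t ω.2).im| ∂(μ.prod μ)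
        ≤ 2 * ∫ ω, ⨆ t, ‖Z t ω‖ ∂μ := by
  have hre t : Integrable (fun ω => (Z t ω).re) μ := (hint t).re
  have him t : Integrable (fun ω => (Z t ω).im) μ := (hint t).im
  have hre₀ t : ∫ ω, (Z t ω).re ∂μ = 0 := by simpa [hmean t] using integral_re (hint t)
  have him₀ t : ∫ ω, (Z t ω).im ∂μ = 0 := by simpa [hmean t] using integral_im (hint t)
  have hsupRe := Integrable.ciSup fun t => (hre t).abs
  have hsupIm := Integrable.ciSup fun t => (him t).abs
  have hnorm_le : ∫ ω, ⨆ t, ‖Z t ω‖ ∂μ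
      ≤ ∫ ω, ⨆ t, |(Z t ω).re| ∂μ + ∫ ω, ⨆ t, |(Z t ω).im| ∂μ := by
    rw [← integral_add hsupRe hsupIm]
    exact integral_mono (Integrable.ciSup fun t => (hint t).norm) (hsupRe.add hsupIm)
      fun ω => ciSup_le_ciSup_add_ciSup_of_le fun t => Complex.norm_le_abs_re_add_abs_im _
  have hre_le := integral_ciSup_mono (fun t => (hre t).abs) (fun t => (hint t).norm)
    fun t ω => Complex.abs_re_le_norm (Z t ω)
  have him_le := integral_ciSup_mono (fun t => (him t).abs) (fun t => (hint t).norm)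
    fun t ω => Complex.abs_im_le_norm (Z t ω)
  have hlowRe := integral_ciSup_abs_le_integral_prod_of_integral_snd_eq_zero hre him him₀
  have hlowIm := integral_ciSup_abs_le_integral_prod_of_integral_fst_eq_zero hre him hre₀
  have hup := integral_prod_ciSup_abs_add_le hre him
  constructor <;> linarith
end
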